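/- For all ℓ, j with r ≤ ℓ ≤ j ≤ n one has, in H(χ): Y_j * Y_ℓ = Y_ℓ * Y_j = p^{n−j} · Y_ℓ. -/

import Mathlib

/-!
For `ℓ ≥ r`, the element `Y_ℓ = Σ_{i=ℓ}^n V_i` is `χ_B` extended by zero from
`Γ₀(p^ℓ) = {g : p^ℓ ∣ c_g}`: the double cosets `B y_i B`, `ℓ ≤ i ≤ n`, are the sets
`{c_g = p^i · unit}`, which partition `Γ₀(p^ℓ)`, and on them `V_i` agrees with `χ_B` because
`χ_B` is a character of `Γ₀(p^r)` (the conductor of `χ` divides `p^r`). Convolving such extensions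
of one character from nested subgroups `Γ₀(p^j) ≤ Γ₀(p^ℓ)` multiplies the larger one by
`|Γ₀(p^j)| = p^{n-j} |B|`, in either order.
-/

noncomputable section

/-- `y(t) = (1,0;t,1)` as an element of `GL₂(R)`. -/
def yG {R : Type*} [CommRing R] (t : R) : GL (Fin 2) R :=
  ⟨!![1, 0; t, 1], !![1, 0; -t, 1],
   by ext i j; fin_cases i <;> fin_cases j <;> simp [Matrix.mul_apply, Fin.sum_univ_two],
   by ext i j; fin_cases i <;> fin_cases j <;> simp [Matrix.mul_apply, Fin.sum_univ_two]⟩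

/-- Membership in the subgroup `B` of invertible upper triangular matrices. -/
def inB {R : Type*} [CommRing R] (g : GL (Fin 2) R) : Prop :=
  (g : Matrix (Fin 2) (Fin 2) R) 1 0 = 0

/-- `χ_B(b) = χ(d_b)`, where `d_b` is the `(2,2)`-entry of `b` (for `b ∈ B` this entry is a
unit; the function is extended by `0` elsewhere). -/
def chiB {R : Type*} [CommRing R] (χ : Rˣ →* ℂˣ) (g : GL (Fin 2) R) : ℂ :=
  letI := Classical.dec (IsUnit ((g : Matrix (Fin 2) (Fin 2) R) 1 1))
  if h : IsUnit ((g : Matrix (Fin 2) (Fin 2) R) 1 1) then (χ h.unit : ℂ) else 0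

/-- `|B|`. -/
def cardB (R : Type*) [CommRing R] : ℕ := Nat.card {g : GL (Fin 2) R // inB g}

/-- Convolution `(f*g)(x) = |B|⁻¹ Σ_{y∈G} f(y) g(y⁻¹x)`. -/
def conv {R : Type*} [CommRing R] [Fintype R] [DecidableEq R]
    (f g : GL (Fin 2) R → ℂ) : GL (Fin 2) R → ℂ :=
  fun x => (cardB R : ℂ)⁻¹ * ∑ y : GL (Fin 2) R, f y * g (y⁻¹ * x)

/-- Membership in the Hecke algebra `H(χ)` of `χ_B`-bi-equivariant functions on `G`. -/
def memH {R : Type*} [CommRing R] (χ : Rˣ →* ℂˣ) (f : GL (Fin 2) R → ℂ) : Prop :=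
  ∀ b x b' : GL (Fin 2) R, inB b → inB b' →
    f (b * x * b') = chiB χ b * chiB χ b' * f x

/-- `V_j`: the unique element of `H(χ)` vanishing off the double coset `B y_j B` with
`V_j(y_j) = 1`, where `y_j = (1,0;p^j,1)`. -/
def isV (p n : ℕ) (χ : (ZMod (p ^ n))ˣ →* ℂˣ) (j : ℕ)
    (V : GL (Fin 2) (ZMod (p ^ n)) → ℂ) : Prop :=
  memH χ V ∧
  (∀ x : GL (Fin 2) (ZMod (p ^ n)),
      (¬ ∃ b b' : GL (Fin 2) (ZMod (p ^ n)), inB b ∧ inB b' ∧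
          x = b * yG ((p : ZMod (p ^ n)) ^ j) * b') → V x = 0) ∧
  V (yG ((p : ZMod (p ^ n)) ^ j)) = 1

/-- `χ` has conductor `p^r`: trivial on units `≡ 1 (mod p^r)`, nontrivial on units
`≡ 1 (mod p^{r−1})`. -/
def hasConductor (p n r : ℕ) (χ : (ZMod (p ^ n))ˣ →* ℂˣ) : Prop :=
  (∀ u : (ZMod (p ^ n))ˣ, (p : ZMod (p ^ n)) ^ r ∣ ((u : ZMod (p ^ n)) - 1) → χ u = 1) ∧
  ∃ u : (ZMod (p ^ n))ˣ, (p : ZMod (p ^ n)) ^ (r - 1) ∣ ((u : ZMod (p ^ n)) - 1) ∧ χ u ≠ 1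

namespace Matrix.GeneralLinearGroup

variable {R : Type*} [CommRing R]

lemma mul_apply_fin_two (g h : GL (Fin 2) R) (i j : Fin 2) :
    (g * h) i j = g i 0 * h 0 j + g i 1 * h 1 j := by
  simp [Matrix.mul_apply, Fin.sum_univ_two]

lemma inv_apply_one_zero_fin_two (g : GL (Fin 2) R) :
    g⁻¹ 1 0 = Ring.inverse (g : Matrix (Fin 2) (Fin 2) R).det * -g 1 0 := by
  simp [Matrix.inv_def, Matrix.adjugate_fin_two]

end Matrix.GeneralLinearGroup

open Matrix.GeneralLinearGroup

lemma IsUnit.add_of_mem_jacobson_bot {R : Type*} [CommRing R] {u x : R} (hu : IsUnit u)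
    (hx : x ∈ (⊥ : Ideal R).jacobson) : IsUnit (u + x) := by
  obtain ⟨u, rfl⟩ := hu
  convert u.isUnit.mul (Ideal.mem_jacobson_bot.mp hx ↑u⁻¹) using 1
  rw [mul_add, mul_one, mul_left_comm, Units.mul_inv, mul_one, add_comm]

section Gamma0

variable {R : Type*} [CommRing R]

def Gamma0 (I : Ideal R) : Subgroup (GL (Fin 2) R) where
  carrier := {g | g 1 0 ∈ I}
  mul_mem' {g h} hg hh := by
    simp only [Set.mem_ofPred_eq, mul_apply_fin_two] at *
    exact I.add_mem (I.mul_mem_right _ hg) (I.mul_mem_left _ hh)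
  one_mem' := by simp
  inv_mem' {g} hg := by
    simp only [Set.mem_ofPred_eq, inv_apply_one_zero_fin_two] at *
    exact I.mul_mem_left _ (I.neg_mem hg)

lemma mem_Gamma0 {I : Ideal R} {g : GL (Fin 2) R} : g ∈ Gamma0 I ↔ g 1 0 ∈ I := Iff.rfl

lemma Gamma0_mono {I J : Ideal R} (h : I ≤ J) : Gamma0 I ≤ Gamma0 J := fun _ hg => h hg

lemma inB_iff_mem_Gamma0_bot {g : GL (Fin 2) R} : inB g ↔ g ∈ Gamma0 ⊥ :=
  Ideal.mem_bot.symm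

lemma yG_mem_Gamma0 {I : Ideal R} {t : R} (ht : t ∈ I) : yG t ∈ Gamma0 I := ht

lemma yG_neg (t : R) : yG (-t) = (yG t)⁻¹ := Units.ext rfl

lemma yG_mul_apply_zero_zero (t : R) (g : GL (Fin 2) R) : (yG t * g) 0 0 = g 0 0 := by
  simp [mul_apply_fin_two, yG]

lemma yG_mul_apply_one_zero (t : R) (g : GL (Fin 2) R) : (yG t * g) 1 0 = t * g 0 0 + g 1 0 := by
  simp [mul_apply_fin_two, yG]

lemma isUnit_apply_of_mem_Gamma0 {I : Ideal R} (hI : I ≤ (⊥ : Ideal R).jacobson)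
    {g : GL (Fin 2) R} (hg : g ∈ Gamma0 I) : IsUnit (g 0 0) ∧ IsUnit (g 1 1) := by
  have hdet : IsUnit (g 0 0 * g 1 1 - g 0 1 * g 1 0) := by
    simpa [Matrix.det_fin_two] using (Matrix.GeneralLinearGroup.det g).isUnit
  have := hdet.add_of_mem_jacobson_bot (hI (I.mul_mem_left (g 0 1) hg))
  exact IsUnit.mul_iff.mp (by simpa using this)

lemma chiB_of_apply_eq (χ : Rˣ →* ℂˣ) {g : GL (Fin 2) R} {u : Rˣ} (h : g 1 1 = u) :
    chiB χ g = χ u := by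
  have hu : IsUnit (g 1 1) := h ▸ u.isUnit
  rw [chiB, dif_pos hu]
  congr 3
  exact Units.ext (hu.unit_spec.trans h)

lemma chiB_yG (χ : Rˣ →* ℂˣ) (t : R) : chiB χ (yG t) = 1 := by
  rw [chiB_of_apply_eq χ (u := 1) rfl, map_one, Units.val_one]

lemma chiB_mul_of_mem_Gamma0 {I : Ideal R} (hI : I ≤ (⊥ : Ideal R).jacobson) {χ : Rˣ →* ℂˣ}
    (hχ : ∀ u : Rˣ, (u : R) - 1 ∈ I → χ u = 1) {g h : GL (Fin 2) R}
    (hg : g ∈ Gamma0 I) (hh : h ∈ Gamma0 I) :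
    chiB χ (g * h) = chiB χ g * chiB χ h := by
  obtain ⟨U, hU⟩ := (isUnit_apply_of_mem_Gamma0 hI hg).2
  obtain ⟨V, hV⟩ := (isUnit_apply_of_mem_Gamma0 hI hh).2
  -- `d_{gh} = d_g d_h (1 + x)` with `x ∈ I`, and `χ` kills the unit `1 + x`
  set x := g 1 0 * h 0 1 * ↑(U * V)⁻¹
  have hx : x ∈ I := I.mul_mem_right _ (I.mul_mem_right _ hg)
  obtain ⟨W, hW⟩ := Ideal.mem_jacobson_bot.mp (hI hx) 1
  have hgh : (g * h) 1 1 = ↑(U * V * W) := by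
    rw [mul_apply_fin_two, Units.val_mul, hW, ← hU, ← hV, ← Units.val_mul]
    linear_combination (-(g 1 0 * h 0 1)) * (U * V).mul_inv
  rw [chiB_of_apply_eq χ hgh, chiB_of_apply_eq χ hU.symm, chiB_of_apply_eq χ hV.symm, map_mul,
    map_mul, hχ W (by simpa [hW] using hx), mul_one, Units.val_mul]

def diagGL (w : Rˣ) : GL (Fin 2) R :=
  ⟨!![(w : R), 0; 0, 1], !![((w⁻¹ : Rˣ) : R), 0; 0, 1],
   by ext i j; fin_cases i <;> fin_cases j <;> simp [Matrix.mul_apply, Fin.sum_univ_two],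
   by ext i j; fin_cases i <;> fin_cases j <;> simp [Matrix.mul_apply, Fin.sum_univ_two]⟩

lemma diagGL_inv (w : Rˣ) : diagGL w⁻¹ = (diagGL w)⁻¹ := Units.ext rfl

lemma diagGL_mul_apply_zero_zero (w : Rˣ) (g : GL (Fin 2) R) :
    (diagGL w * g) 0 0 = w * g 0 0 := by
  simp [mul_apply_fin_two, diagGL]

lemma diagGL_mul_apply_one_zero (w : Rˣ) (g : GL (Fin 2) R) : (diagGL w * g) 1 0 = g 1 0 := by
  simp [mul_apply_fin_two, diagGL]

lemma exists_inB_mul_yG_mul_iff {t : R} (ht : t ∈ (⊥ : Ideal R).jacobson)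
    (x : GL (Fin 2) R) :
    (∃ b b', inB b ∧ inB b' ∧ x = b * yG t * b') ↔ ∃ u : Rˣ, x 1 0 = t * u := by
  constructor
  · rintro ⟨b, b', hb, hb', rfl⟩
    obtain ⟨U, hU⟩ := (isUnit_apply_of_mem_Gamma0 bot_le (inB_iff_mem_Gamma0_bot.mp hb)).2
    obtain ⟨V, hV⟩ := (isUnit_apply_of_mem_Gamma0 bot_le (inB_iff_mem_Gamma0_bot.mp hb')).1
    refine ⟨U * V, ?_⟩
    rw [mul_assoc, mul_apply_fin_two, yG_mul_apply_one_zero, (hb : b 1 0 = 0),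
      (hb' : b' 1 0 = 0), Units.val_mul U V, ← hU, ← hV]
    ring
  · rintro ⟨u, hu⟩
    have hx : x ∈ Gamma0 (⊥ : Ideal R).jacobson := by
      rw [mem_Gamma0, hu]
      exact Ideal.mul_mem_right _ _ ht
    obtain ⟨A, hA⟩ := (isUnit_apply_of_mem_Gamma0 le_rfl hx).1
    refine ⟨diagGL (A * u⁻¹), yG (-t) * diagGL (A * u⁻¹)⁻¹ * x, rfl, ?_, ?_⟩
    · rw [inB, mul_assoc, yG_mul_apply_one_zero, diagGL_mul_apply_zero_zero,
        diagGL_mul_apply_one_zero, hu, ← hA, mul_inv_rev, inv_inv, Units.val_mul]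
      linear_combination (-(t * u)) * A.inv_mul
    · rw [yG_neg, diagGL_inv]
      group

lemma memH.apply_mul_yG_mul {I : Ideal R} (hI : I ≤ (⊥ : Ideal R).jacobson) {χ : Rˣ →* ℂˣ}
    (hχ : ∀ u : Rˣ, (u : R) - 1 ∈ I → χ u = 1) {f : GL (Fin 2) R → ℂ} (hf : memH χ f)
    {t : R} (ht : t ∈ I) (hf1 : f (yG t) = 1) {b b' : GL (Fin 2) R} (hb : inB b) (hb' : inB b') :
    f (b * yG t * b') = chiB χ (b * yG t * b') := by
  have hB : ∀ {g}, inB g → g ∈ Gamma0 I := fun hg =>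
    Gamma0_mono bot_le (inB_iff_mem_Gamma0_bot.mp hg)
  rw [hf b (yG t) b' hb hb', hf1, chiB_mul_of_mem_Gamma0 hI hχ _ (hB hb'),
    chiB_mul_of_mem_Gamma0 hI hχ (hB hb) (yG_mem_Gamma0 ht), chiB_yG, mul_one, mul_one]
  exact mul_mem (hB hb) (yG_mem_Gamma0 ht)

/-- `(t, b) ↦ y(t) b` is a bijection `I × B → Γ₀(I)`, since `t = c/a` can be read off. -/
lemma card_Gamma0 {I : Ideal R} (hI : I ≤ (⊥ : Ideal R).jacobson) :
    Nat.card (Gamma0 I) = Nat.card I * Nat.card (Gamma0 (⊥ : Ideal R)) := by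
  rw [← Nat.card_prod]
  symm
  refine Nat.card_eq_of_bijective (fun q => ⟨yG (q.1 : R) * q.2, ?_⟩) ⟨?_, ?_⟩
  · exact mul_mem (yG_mem_Gamma0 q.1.2) (Gamma0_mono bot_le q.2.2)
  · rintro ⟨⟨t, ht⟩, ⟨b, hb⟩⟩ ⟨⟨t', ht'⟩, ⟨b', hb'⟩⟩ h
    simp only [Subtype.mk.injEq] at h
    have h00 := congrArg (fun g : GL (Fin 2) R => g 0 0) h
    have h10 := congrArg (fun g : GL (Fin 2) R => g 1 0) h
    simp only [yG_mul_apply_zero_zero, yG_mul_apply_one_zero, Ideal.mem_bot.mp hb,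
      Ideal.mem_bot.mp hb', add_zero] at h00 h10
    obtain ⟨A, hA⟩ := (isUnit_apply_of_mem_Gamma0 bot_le hb).1
    obtain rfl : t = t' := by
      rw [← h00, ← hA] at h10
      exact A.mul_left_inj.mp h10
    obtain rfl := mul_left_cancel h
    rfl
  · rintro ⟨g, hg⟩
    obtain ⟨A, hA⟩ := (isUnit_apply_of_mem_Gamma0 hI hg).1
    refine ⟨⟨⟨g 1 0 * ↑A⁻¹, I.mul_mem_right _ hg⟩, ⟨yG (-(g 1 0 * ↑A⁻¹)) * g, ?_⟩⟩, ?_⟩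
    · rw [mem_Gamma0, Ideal.mem_bot, yG_mul_apply_one_zero, ← hA]
      linear_combination (-(g 1 0)) * A.inv_mul
    · simp [yG_neg]

lemma cardB_eq_card_Gamma0_bot (R : Type*) [CommRing R] :
    cardB R = Nat.card (Gamma0 (⊥ : Ideal R)) :=
  Nat.card_congr (Equiv.subtypeEquivRight fun _ => inB_iff_mem_Gamma0_bot)

end Gamma0

section SubgroupConvolution

variable {G M : Type*} [Group G] [CommSemiring M] {K L : Subgroup G} {ψ : G → M}

lemma indicator_mul_left_of_mem (hψ : ∀ a ∈ L, ∀ b ∈ L, ψ (a * b) = ψ a * ψ b) {k : G}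
    (hk : k ∈ L) (g : G) :
    (L : Set G).indicator ψ (k * g) = ψ k * (L : Set G).indicator ψ g := by
  by_cases hg : g ∈ L
  · simp [hg, mul_mem hk hg, hψ k hk g hg]
  · have hkg : k * g ∉ L := fun h => hg (by simpa using mul_mem (inv_mem hk) h)
    simp [hg, hkg]

lemma indicator_mul_right_of_mem (hψ : ∀ a ∈ L, ∀ b ∈ L, ψ (a * b) = ψ a * ψ b) {k : G}
    (hk : k ∈ L) (g : G) :
    (L : Set G).indicator ψ (g * k) = (L : Set G).indicator ψ g * ψ k := by
  by_cases hg : g ∈ L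
  · simp [hg, mul_mem hg hk, hψ g hg k hk]
  · have hgk : g * k ∉ L := fun h => hg (by simpa using mul_mem h (inv_mem hk))
    simp [hg, hgk]

variable [Fintype G]

lemma sum_ite_mem_eq_card_mul (K : Subgroup G) [DecidablePred (· ∈ K)] (c : M) :
    ∑ y, (if y ∈ K then c else 0) = Nat.card K * c := by
  rw [Finset.sum_ite, Finset.sum_const_zero, add_zero, Finset.sum_const, nsmul_eq_mul,
    Nat.card_eq_fintype_card, Fintype.card_subtype]

lemma sum_indicator_mul_indicator_inv_mul (hKL : K ≤ L)
    (hψ : ∀ a ∈ L, ∀ b ∈ L, ψ (a * b) = ψ a * ψ b) (x : G) :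
    ∑ y, (K : Set G).indicator ψ y * (L : Set G).indicator ψ (y⁻¹ * x) =
      Nat.card K * (L : Set G).indicator ψ x := by
  classical
  rw [← sum_ite_mem_eq_card_mul]
  refine Finset.sum_congr rfl fun y _ => ?_
  split_ifs with hy
  · rw [Set.indicator_of_mem hy, ← indicator_mul_left_of_mem hψ (hKL hy), mul_inv_cancel_left]
  · rw [Set.indicator_of_notMem hy, zero_mul]

lemma sum_indicator_mul_indicator_inv_mul' (hKL : K ≤ L)
    (hψ : ∀ a ∈ L, ∀ b ∈ L, ψ (a * b) = ψ a * ψ b) (x : G) :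
    ∑ y, (L : Set G).indicator ψ y * (K : Set G).indicator ψ (y⁻¹ * x) =
      Nat.card K * (L : Set G).indicator ψ x := by
  classical
  rw [← Fintype.sum_equiv ((Equiv.inv G).trans (Equiv.mulLeft x))
    (fun z => (L : Set G).indicator ψ (x * z⁻¹) * (K : Set G).indicator ψ z) _ (by simp),
    ← sum_ite_mem_eq_card_mul]
  refine Finset.sum_congr rfl fun z _ => ?_
  split_ifs with hz
  · rw [Set.indicator_of_mem hz, ← indicator_mul_right_of_mem hψ (hKL hz), inv_mul_cancel_right]
  · rw [Set.indicator_of_notMem hz, mul_zero]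

end SubgroupConvolution

section PrimePowerModulus

variable {p n : ℕ}

lemma natCast_mem_jacobson_bot : (p : ZMod (p ^ n)) ∈ (⊥ : Ideal (ZMod (p ^ n))).jacobson :=
  Ideal.radical_le_jacobson ⟨n, by simp [← Nat.cast_pow]⟩

lemma span_pow_le_jacobson_bot {ℓ : ℕ} (hℓ : 1 ≤ ℓ) :
    Ideal.span {(p : ZMod (p ^ n)) ^ ℓ} ≤ (⊥ : Ideal (ZMod (p ^ n))).jacobson :=
  (Ideal.span_singleton_le_iff_mem _).mpr
    (Ideal.pow_mem_of_mem _ natCast_mem_jacobson_bot ℓ hℓ)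

variable [Fact p.Prime]

lemma natCast_dvd_of_not_isUnit (hn : 0 < n) {t : ZMod (p ^ n)} (ht : ¬IsUnit t) :
    (p : ZMod (p ^ n)) ∣ t := by
  have : NeZero (p ^ n) := ⟨pow_ne_zero _ (Fact.out : p.Prime).ne_zero⟩
  rw [← ZMod.natCast_zmod_val t, ZMod.isUnit_natCast_iff_not_dvd_pow Fact.out hn, not_not] at ht
  obtain ⟨k, hk⟩ := ht
  exact ⟨k, by rw [← ZMod.natCast_zmod_val t, hk, Nat.cast_mul]⟩

lemma exists_eq_pow_mul_unit (hn : 0 < n) {ℓ : ℕ} (hℓ : ℓ ≤ n) {c : ZMod (p ^ n)}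
    (hc : (p : ZMod (p ^ n)) ^ ℓ ∣ c) :
    ∃ i, ℓ ≤ i ∧ i ≤ n ∧ ∃ u : (ZMod (p ^ n))ˣ, c = (p : ZMod (p ^ n)) ^ i * u := by
  induction h : n - ℓ generalizing ℓ with
  | zero =>
    obtain rfl : ℓ = n := by omega
    obtain ⟨t, rfl⟩ := hc
    refine ⟨ℓ, le_rfl, le_rfl, 1, ?_⟩
    simp [← Nat.cast_pow]
  | succ k ih =>
    obtain ⟨t, rfl⟩ := hc
    by_cases ht : IsUnit t
    · exact ⟨ℓ, le_rfl, hℓ, ht.unit, rfl⟩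
    obtain ⟨i, hi, hin, u, hu⟩ := ih (ℓ := ℓ + 1) (by omega)
      (by rw [pow_succ]; exact mul_dvd_mul_left _ (natCast_dvd_of_not_isUnit hn ht)) (by omega)
    exact ⟨i, by omega, hin, u, hu⟩

lemma le_of_pow_dvd_pow_mul_unit {i k : ℕ} (hi : i < n) (u : (ZMod (p ^ n))ˣ)
    (h : (p : ZMod (p ^ n)) ^ k ∣ (p : ZMod (p ^ n)) ^ i * u) : k ≤ i := by
  by_contra! hik
  obtain ⟨s, hs⟩ := h
  have hunit : IsUnit ((u : ZMod (p ^ n)) + -((p : ZMod (p ^ n)) ^ (k - i) * s)) :=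
    u.isUnit.add_of_mem_jacobson_bot (neg_mem (Ideal.mul_mem_right _ _
      (span_pow_le_jacobson_bot (by omega) (Ideal.mem_span_singleton_self _))))
  have hzero :
      (p : ZMod (p ^ n)) ^ i * ((u : ZMod (p ^ n)) + -((p : ZMod (p ^ n)) ^ (k - i) * s)) = 0 := by
    rw [mul_add, hs, mul_neg, ← mul_assoc, ← pow_add, Nat.add_sub_cancel' hik.le, add_neg_cancel]
  rw [hunit.mul_left_eq_zero, ← Nat.cast_pow, ZMod.natCast_eq_zero_iff,
    Nat.pow_dvd_pow_iff_le_right (Fact.out : p.Prime).one_lt] at hzero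
  omega

lemma pow_mul_unit_inj {i k : ℕ} (hi : i ≤ n) (hk : k ≤ n) {u v : (ZMod (p ^ n))ˣ}
    (h : (p : ZMod (p ^ n)) ^ i * u = (p : ZMod (p ^ n)) ^ k * v) : i = k := by
  rcases lt_trichotomy i k with hik | rfl | hki
  · exact absurd (le_of_pow_dvd_pow_mul_unit (by omega) u ⟨v, h⟩) (by omega)
  · rfl
  · exact absurd (le_of_pow_dvd_pow_mul_unit (by omega) v ⟨u, h.symm⟩) (by omega)

lemma card_span_pow {j : ℕ} (hj : j ≤ n) :
    Nat.card (Ideal.span {(p : ZMod (p ^ n)) ^ j}) = p ^ (n - j) := by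
  have hp : p.Prime := Fact.out
  have hspan : ((Ideal.span {(p : ZMod (p ^ n)) ^ j}).restrictScalars ℤ).toAddSubgroup =
      AddSubgroup.zmultiples ((p : ZMod (p ^ n)) ^ j) := by
    rw [Submodule.restrictScalars_span ℤ _ ZMod.intCast_surjective,
      Submodule.span_singleton_toAddSubgroup_eq_zmultiples]
  change Nat.card ((Ideal.span {(p : ZMod (p ^ n)) ^ j}).restrictScalars ℤ).toAddSubgroup = _
  rw [hspan, Nat.card_zmultiples, ← Nat.cast_pow, ZMod.addOrderOf_coe _ (pow_ne_zero _ hp.ne_zero),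
    Nat.gcd_eq_right (pow_dvd_pow p hj), Nat.pow_div hj hp.pos]

lemma cardB_ne_zero : cardB (ZMod (p ^ n)) ≠ 0 := by
  have : Nonempty {g : GL (Fin 2) (ZMod (p ^ n)) // inB g} := ⟨⟨1, by simp [inB]⟩⟩
  exact Nat.card_pos.ne'

lemma card_Gamma0_span_pow {j : ℕ} (hj : 1 ≤ j) (hjn : j ≤ n) :
    Nat.card (Gamma0 (Ideal.span {(p : ZMod (p ^ n)) ^ j})) =
      p ^ (n - j) * cardB (ZMod (p ^ n)) := by
  rw [card_Gamma0 (span_pow_le_jacobson_bot hj), card_span_pow hjn, cardB_eq_card_Gamma0_bot]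

end PrimePowerModulus

section HeckeOperators

variable {p n : ℕ} {χ : (ZMod (p ^ n))ˣ →* ℂˣ}

variable (p n χ) in
def chiGamma0 (m : ℕ) : GL (Fin 2) (ZMod (p ^ n)) → ℂ :=
  (Gamma0 (Ideal.span {(p : ZMod (p ^ n)) ^ m}) : Set (GL (Fin 2) (ZMod (p ^ n)))).indicator
    (chiB χ)

lemma eq_one_of_sub_one_mem_span_pow {r ℓ : ℕ} (hrℓ : r ≤ ℓ)
    (hχ : ∀ u : (ZMod (p ^ n))ˣ, (p : ZMod (p ^ n)) ^ r ∣ ((u : ZMod (p ^ n)) - 1) → χ u = 1)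
    (u : (ZMod (p ^ n))ˣ) (hu : (u : ZMod (p ^ n)) - 1 ∈ Ideal.span {(p : ZMod (p ^ n)) ^ ℓ}) :
    χ u = 1 :=
  hχ u ((pow_dvd_pow _ hrℓ).trans (Ideal.mem_span_singleton.mp hu))

open Classical in
lemma isV.apply {i r : ℕ} (hr : 1 ≤ r) (hri : r ≤ i)
    (hχ : ∀ u : (ZMod (p ^ n))ˣ, (p : ZMod (p ^ n)) ^ r ∣ ((u : ZMod (p ^ n)) - 1) → χ u = 1)
    {V : GL (Fin 2) (ZMod (p ^ n)) → ℂ} (hV : isV p n χ i V) (x : GL (Fin 2) (ZMod (p ^ n))) :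
    V x = if ∃ u : (ZMod (p ^ n))ˣ, x 1 0 = (p : ZMod (p ^ n)) ^ i * u then chiB χ x else 0 := by
  have hI := span_pow_le_jacobson_bot (p := p) (n := n) (hr.trans hri)
  have hdc := exists_inB_mul_yG_mul_iff (hI (Ideal.mem_span_singleton_self _)) x
  split_ifs with hx
  · obtain ⟨b, b', hb, hb', rfl⟩ := hdc.mpr hx
    exact memH.apply_mul_yG_mul hI (eq_one_of_sub_one_mem_span_pow hri hχ) hV.1
      (Ideal.mem_span_singleton_self _) hV.2.2 hb hb'
  · exact hV.2.1 x (mt hdc.mp hx)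

variable [Fact p.Prime]

lemma sum_Icc_V_eq_chiGamma0 {r ℓ : ℕ} (hr : 1 ≤ r) (hrℓ : r ≤ ℓ) (hℓn : ℓ ≤ n)
    (hχ : ∀ u : (ZMod (p ^ n))ˣ, (p : ZMod (p ^ n)) ^ r ∣ ((u : ZMod (p ^ n)) - 1) → χ u = 1)
    {V : ℕ → GL (Fin 2) (ZMod (p ^ n)) → ℂ} (hV : ∀ j, r ≤ j → j ≤ n → isV p n χ j (V j))
    (x : GL (Fin 2) (ZMod (p ^ n))) :
    ∑ i ∈ Finset.Icc ℓ n, V i x = chiGamma0 p n χ ℓ x := by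
  rw [chiGamma0, Finset.sum_congr rfl fun i hi =>
    (hV i (hrℓ.trans (Finset.mem_Icc.mp hi).1) (Finset.mem_Icc.mp hi).2).apply hr
      (hrℓ.trans (Finset.mem_Icc.mp hi).1) hχ x]
  by_cases hx : (p : ZMod (p ^ n)) ^ ℓ ∣ x 1 0
  · obtain ⟨i₀, hℓi₀, hi₀n, u₀, hu₀⟩ := exists_eq_pow_mul_unit (by omega) hℓn hx
    rw [Set.indicator_of_mem (mem_Gamma0.mpr (Ideal.mem_span_singleton.mpr hx)),
      Finset.sum_eq_single_of_mem i₀ (Finset.mem_Icc.mpr ⟨hℓi₀, hi₀n⟩), if_pos ⟨u₀, hu₀⟩]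
    rintro i hi hne
    refine if_neg fun ⟨u, hu⟩ => hne ?_
    exact pow_mul_unit_inj (p := p) (Finset.mem_Icc.mp hi).2 hi₀n (hu.symm.trans hu₀)
  · rw [Set.indicator_of_notMem (fun h => hx (Ideal.mem_span_singleton.mp (mem_Gamma0.mp h)))]
    refine Finset.sum_eq_zero fun i hi => if_neg fun ⟨u, hu⟩ => hx ?_
    rw [hu]
    exact (pow_dvd_pow _ (Finset.mem_Icc.mp hi).1).mul_right _

lemma conv_chiGamma0 {r ℓ j : ℕ} (hr : 1 ≤ r) (hrℓ : r ≤ ℓ) (hℓj : ℓ ≤ j) (hjn : j ≤ n)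
    (hχ : ∀ u : (ZMod (p ^ n))ˣ, (p : ZMod (p ^ n)) ^ r ∣ ((u : ZMod (p ^ n)) - 1) → χ u = 1) :
    conv (chiGamma0 p n χ j) (chiGamma0 p n χ ℓ) =
        (fun x => (p : ℂ) ^ (n - j) * chiGamma0 p n χ ℓ x) ∧
      conv (chiGamma0 p n χ ℓ) (chiGamma0 p n χ j) =
        (fun x => (p : ℂ) ^ (n - j) * chiGamma0 p n χ ℓ x) := by
  have hKL : Gamma0 (Ideal.span {(p : ZMod (p ^ n)) ^ j}) ≤
      Gamma0 (Ideal.span {(p : ZMod (p ^ n)) ^ ℓ}) :=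
    Gamma0_mono (Ideal.span_singleton_le_span_singleton.mpr (pow_dvd_pow _ hℓj))
  have hψ : ∀ a ∈ Gamma0 (Ideal.span {(p : ZMod (p ^ n)) ^ ℓ}),
      ∀ b ∈ Gamma0 (Ideal.span {(p : ZMod (p ^ n)) ^ ℓ}), chiB χ (a * b) = chiB χ a * chiB χ b :=
    fun a ha b hb => chiB_mul_of_mem_Gamma0 (span_pow_le_jacobson_bot (hr.trans hrℓ))
      (eq_one_of_sub_one_mem_span_pow hrℓ hχ) ha hb
  have hcard := card_Gamma0_span_pow (p := p) (hr.trans (hrℓ.trans hℓj)) hjn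
  have hB : (cardB (ZMod (p ^ n)) : ℂ) ≠ 0 := Nat.cast_ne_zero.mpr cardB_ne_zero
  constructor <;> funext x <;> simp only [conv, chiGamma0]
  · rw [sum_indicator_mul_indicator_inv_mul hKL hψ, hcard]
    push_cast
    field_simp
  · rw [sum_indicator_mul_indicator_inv_mul' hKL hψ, hcard]
    push_cast
    field_simp

end HeckeOperators

theorem stmt8_general (p n r : ℕ) [Fact p.Prime] (hr : 1 ≤ r)
    (χ : (ZMod (p ^ n))ˣ →* ℂˣ) (hχ : hasConductor p n r χ)
    (V : ℕ → GL (Fin 2) (ZMod (p ^ n)) → ℂ)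
    (hV : ∀ j, r ≤ j → j ≤ n → isV p n χ j (V j))
    (ℓ j : ℕ) (hℓ : r ≤ ℓ) (hℓj : ℓ ≤ j) (hj : j ≤ n) :
    conv (fun t => ∑ i ∈ Finset.Icc j n, V i t) (fun t => ∑ i ∈ Finset.Icc ℓ n, V i t) =
      conv (fun t => ∑ i ∈ Finset.Icc ℓ n, V i t) (fun t => ∑ i ∈ Finset.Icc j n, V i t) ∧
    ∀ x, conv (fun t => ∑ i ∈ Finset.Icc j n, V i t) (fun t => ∑ i ∈ Finset.Icc ℓ n, V i t) x =
      (p : ℂ) ^ (n - j) * ∑ i ∈ Finset.Icc ℓ n, V i x := by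
  simp only [sum_Icc_V_eq_chiGamma0 hr (hℓ.trans hℓj) hj hχ.1 hV,
    sum_Icc_V_eq_chiGamma0 hr hℓ (hℓj.trans hj) hχ.1 hV]
  obtain ⟨hjℓ, hℓj'⟩ := conv_chiGamma0 hr hℓ hℓj hj hχ.1
  exact ⟨hjℓ.trans hℓj'.symm, congrFun hjℓ⟩

/-- For `r ≤ ℓ ≤ j ≤ n`: `Y_j * Y_ℓ = Y_ℓ * Y_j = p^{n−j} Y_ℓ` in `H(χ)`, where
`Y_ℓ = Σ_{i=ℓ}^n V_i`. -/
theorem stmt8 (p n r : ℕ) [Fact p.Prime] (hn : 1 ≤ n) (hr : 1 ≤ r) (hrn : r ≤ n)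
    (χ : (ZMod (p ^ n))ˣ →* ℂˣ) (hχ : hasConductor p n r χ)
    (V : ℕ → GL (Fin 2) (ZMod (p ^ n)) → ℂ)
    (hV : ∀ j, r ≤ j → j ≤ n → isV p n χ j (V j))
    (ℓ j : ℕ) (hℓ : r ≤ ℓ) (hℓj : ℓ ≤ j) (hj : j ≤ n) :
    conv (fun t => ∑ i ∈ Finset.Icc j n, V i t) (fun t => ∑ i ∈ Finset.Icc ℓ n, V i t) =
      conv (fun t => ∑ i ∈ Finset.Icc ℓ n, V i t) (fun t => ∑ i ∈ Finset.Icc j n, V i t) ∧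
    ∀ x, conv (fun t => ∑ i ∈ Finset.Icc j n, V i t) (fun t => ∑ i ∈ Finset.Icc ℓ n, V i t) x =
      (p : ℂ) ^ (n - j) * ∑ i ∈ Finset.Icc ℓ n, V i x :=
  stmt8_general p n r hr χ hχ V hV ℓ j hℓ hℓj hj

end
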